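/- Let x⁺ = x + M(b − A x) with M = ∑_{j=1}^{p} R_jᵀ B_j A_j⁻¹ R_j and A_j = R_j A R_jᵀ invertible for every j. Assume the partition-of-unity identity ∑_{j=1}^{p} R_jᵀ B_j R_j = I, and assume that for every j the complementary restrictions satisfy R_j R_jᵀ = I, R_{¬j} R_{¬j}ᵀ = I and R_jᵀ R_j + R_{¬j}ᵀ R_{¬j} = I. Then for every i ∈ {1, …, p}, R_i x⁺ = ∑_{j=1}^{p} R_i R_jᵀ B_j A_j⁻¹ ( b_j − R_j A R_{¬j}ᵀ x_{¬j} ), with b_j = R_j b and x_{¬j} = R_{¬j} x. That is, the RAS update is exactly the parallel scheme in which each subdomain communicates only its boundary components x_{¬j}. -/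
import Mathlib


open Matrix

private lemma ras_sum_mulVec {m n α : Type} [Fintype n] (s : Finset α)
    (f : α → Matrix m n ℝ) (v : n → ℝ) :
    (∑ a ∈ s, f a).mulVec v = ∑ a ∈ s, (f a).mulVec v := by
  funext k
  rw [Finset.sum_apply]
  simp only [Matrix.mulVec, dotProduct, Matrix.sum_apply, Finset.sum_mul]
  exact Finset.sum_comm

/-- Under the partition of unity `∑ⱼ Rⱼᵀ Bⱼ Rⱼ = I` and the complementarity conditions
`Rⱼ Rⱼᵀ = I`, `R_{¬j} R_{¬j}ᵀ = I`, `Rⱼᵀ Rⱼ + R_{¬j}ᵀ R_{¬j} = I`, the RAS update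
`x⁺ = x + M (b - A x)` satisfies, for every subdomain `i`,
`Rᵢ x⁺ = ∑ⱼ Rᵢ Rⱼᵀ Bⱼ Aⱼ⁻¹ (bⱼ - Rⱼ A R_{¬j}ᵀ x_{¬j})`. -/
theorem ras_parallel_boundary_form
    {n p : ℕ} {ni : Fin p → ℕ}
    (A : Matrix (Fin n) (Fin n) ℝ) (b x : Fin n → ℝ)
    (R : ∀ i : Fin p, Matrix (Fin (ni i)) (Fin n) ℝ)
    (Rc : ∀ i : Fin p, Matrix (Fin (n - ni i)) (Fin n) ℝ)
    (B : ∀ i : Fin p, Matrix (Fin (ni i)) (Fin (ni i)) ℝ)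
    (hBdiag : ∀ i, (B i).IsDiag)
    (hAj : ∀ j, IsUnit (R j * A * (R j)ᵀ).det)
    (hPU : ∑ j, (R j)ᵀ * B j * R j = (1 : Matrix (Fin n) (Fin n) ℝ))
    (hR : ∀ j, R j * (R j)ᵀ = (1 : Matrix (Fin (ni j)) (Fin (ni j)) ℝ))
    (hRc : ∀ j, Rc j * (Rc j)ᵀ = (1 : Matrix (Fin (n - ni j)) (Fin (n - ni j)) ℝ))
    (hcompl : ∀ j, (R j)ᵀ * R j + (Rc j)ᵀ * Rc j = (1 : Matrix (Fin n) (Fin n) ℝ))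
    (xplus : Fin n → ℝ)
    (hstep : xplus =
      x + (∑ j, (R j)ᵀ * B j * (R j * A * (R j)ᵀ)⁻¹ * R j).mulVec (b - A.mulVec x)) :
    ∀ i : Fin p,
      (R i).mulVec xplus =
        ∑ j, (R i * (R j)ᵀ * B j * (R j * A * (R j)ᵀ)⁻¹).mulVec
          ((R j).mulVec b - (R j * A * (Rc j)ᵀ).mulVec ((Rc j).mulVec x)) := by
  intro i
  subst hstep
  have hinv : ∀ j, (R j * A * (R j)ᵀ)⁻¹ * (R j * A * (R j)ᵀ) = 1 :=
    fun j => Matrix.nonsing_inv_mul _ (hAj j)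
  have hW : ∀ j, (R j * A * (R j)ᵀ)⁻¹ * (R j * A) =
      R j + (R j * A * (R j)ᵀ)⁻¹ * (R j * A * (Rc j)ᵀ) * Rc j := by
    intro j
    calc (R j * A * (R j)ᵀ)⁻¹ * (R j * A)
        = (R j * A * (R j)ᵀ)⁻¹ * (R j * A * ((R j)ᵀ * R j + (Rc j)ᵀ * Rc j)) := by
          rw [hcompl j, Matrix.mul_one]
      _ = (R j * A * (R j)ᵀ)⁻¹ * (R j * A * (R j)ᵀ) * R j
            + (R j * A * (R j)ᵀ)⁻¹ * (R j * A * (Rc j)ᵀ) * Rc j := by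
          simp only [Matrix.mul_add, Matrix.mul_assoc]
      _ = R j + (R j * A * (R j)ᵀ)⁻¹ * (R j * A * (Rc j)ᵀ) * Rc j := by
          rw [hinv j, Matrix.one_mul]
  have hb : R i * (∑ j, (R j)ᵀ * B j * (R j * A * (R j)ᵀ)⁻¹ * R j) =
      ∑ j, R i * (R j)ᵀ * B j * (R j * A * (R j)ᵀ)⁻¹ * R j := by
    rw [Matrix.mul_sum]
    exact Finset.sum_congr rfl fun j _ => by simp only [Matrix.mul_assoc]
  have hx : (∑ j, R i * (R j)ᵀ * B j * (R j * A * (R j)ᵀ)⁻¹ * R j) * A =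
      R i + ∑ j, R i * (R j)ᵀ * B j * (R j * A * (R j)ᵀ)⁻¹ * (R j * A * (Rc j)ᵀ) * Rc j := by
    rw [Matrix.sum_mul]
    have hterm : ∀ j ∈ Finset.univ, (R i * (R j)ᵀ * B j * (R j * A * (R j)ᵀ)⁻¹ * R j) * A =
        R i * ((R j)ᵀ * B j * R j) +
          R i * (R j)ᵀ * B j * (R j * A * (R j)ᵀ)⁻¹ * (R j * A * (Rc j)ᵀ) * Rc j := by
      intro j _
      have h2 : (R i * (R j)ᵀ * B j * (R j * A * (R j)ᵀ)⁻¹ * R j) * A =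
          R i * (R j)ᵀ * B j * ((R j * A * (R j)ᵀ)⁻¹ * (R j * A)) := by
        simp only [Matrix.mul_assoc]
      rw [h2, hW j, Matrix.mul_add]
      simp only [Matrix.mul_assoc]
    rw [Finset.sum_congr rfl hterm, Finset.sum_add_distrib, ← Matrix.mul_sum, hPU,
      Matrix.mul_one]
  have hrhs : ∀ j ∈ Finset.univ, (R i * (R j)ᵀ * B j * (R j * A * (R j)ᵀ)⁻¹).mulVec
        ((R j).mulVec b - (R j * A * (Rc j)ᵀ).mulVec ((Rc j).mulVec x)) =
      (R i * (R j)ᵀ * B j * (R j * A * (R j)ᵀ)⁻¹ * R j).mulVec b -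
        (R i * (R j)ᵀ * B j * (R j * A * (R j)ᵀ)⁻¹ * (R j * A * (Rc j)ᵀ) * Rc j).mulVec x := by
    intro j _
    rw [Matrix.mulVec_sub, Matrix.mulVec_mulVec, Matrix.mulVec_mulVec, Matrix.mulVec_mulVec,
      ← Matrix.mul_assoc]
  rw [Matrix.mulVec_add, Matrix.mulVec_mulVec, Matrix.mulVec_sub, Matrix.mulVec_mulVec, hb, hx,
    Finset.sum_congr rfl hrhs, Finset.sum_sub_distrib, ← ras_sum_mulVec, ← ras_sum_mulVec,
    Matrix.add_mulVec]
  abel
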